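/- Let μ be a nonzero finite discrete measure on S^{n-1} supported on finitely many directions u₁,…,u_m that are not contained in any closed hemisphere, and let φ : (0,∞) → (0,∞) be continuous and strictly increasing with φ(0⁺)=0, φ(1)=1, φ(∞)=∞. If M is a convex body with the origin in its interior, |M°| = ω_n, minimizing ∫ φ(h_L)dμ among all such bodies L with |L°| = ω_n, then M equals the polytope P = ∩_{i=1}^m {x : ⟨x,u_i⟩ ≤ h_M(u_i)}. -/

import Mathlib

open MeasureTheory Metric Filter Set ENNReal

noncomputable section

abbrev E (n : ℕ) := EuclideanSpace ℝ (Fin n)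

abbrev Sph (n : ℕ) := ↥(Metric.sphere (0 : E n) 1)

/-- Convex body in `ℝⁿ` with the origin in its interior. -/
def IsBody {n : ℕ} (K : Set (E n)) : Prop :=
  IsCompact K ∧ Convex ℝ K ∧ 0 ∈ interior K

/-- Support function of a set. -/
def supportFn {n : ℕ} (K : Set (E n)) (u : E n) : ℝ :=
  sSup ((fun x => (inner ℝ x u : ℝ)) '' K)

/-- Polar body. -/
def polarBody {n : ℕ} (K : Set (E n)) : Set (E n) :=
  {y | ∀ x ∈ K, (inner ℝ x y : ℝ) ≤ 1}

/-- Radial function. -/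
def radialFn {n : ℕ} (K : Set (E n)) (u : E n) : ℝ :=
  sSup {r : ℝ | 0 ≤ r ∧ r • u ∈ K}

/-- Volume of the unit ball in `ℝⁿ`. -/
def unitBallVol (n : ℕ) : ℝ≥0∞ := volume (Metric.closedBall (0 : E n) 1)

/-!
Let `P` be the polytope cut out by the supporting half-spaces of `M` in the directions `uᵢ`.
Since the `uᵢ` lie in no closed hemisphere, `P` is a convex body; it contains `M`, and
`h_P(uᵢ) ≤ h_M(uᵢ)`. If `P ≠ M`, a hyperplane separating a point of `P \ M` from `M` yields a
nonempty open subset of `M° \ P°`, hence `|P°| < |M°| = ωₙ`. Shrinking `P` by a factor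
`t < 1` restores the volume constraint `|(tP)°| = ωₙ` and strictly decreases every `h(uᵢ)`,
hence (as `φ` is strictly increasing) the functional, contradicting minimality of `M`.
-/

open Bornology
open scoped Pointwise Topology

section ConvexGeometry

variable {n : ℕ}

theorem IsBody.smul {K : Set (E n)} (hK : IsBody K) {t : ℝ} (ht : 0 < t) : IsBody (t • K) := by
  refine ⟨hK.1.smul t, hK.2.1.smul t, ?_⟩
  rw [interior_smul₀ ht.ne']
  exact ⟨0, hK.2.2, smul_zero t⟩

theorem le_supportFn {K : Set (E n)} (hK : IsCompact K) {x : E n} (hx : x ∈ K) (v : E n) :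
    inner ℝ x v ≤ supportFn K v :=
  le_csSup (hK.image (by fun_prop)).bddAbove (mem_image_of_mem _ hx)

theorem supportFn_le {K : Set (E n)} (hK : K.Nonempty) {v : E n} {c : ℝ}
    (h : ∀ x ∈ K, inner ℝ x v ≤ c) : supportFn K v ≤ c :=
  csSup_le (hK.image _) (forall_mem_image.2 h)

theorem supportFn_pos {K : Set (E n)} (hK : IsCompact K) (h0 : (0 : E n) ∈ interior K)
    {v : E n} (hv : v ≠ 0) : 0 < supportFn K v := by
  have hseg : Tendsto (fun t : ℝ => t • v) (𝓝[>] 0) (𝓝 0) :=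
    ((continuous_id.smul continuous_const).tendsto' 0 0 (zero_smul ℝ v)).mono_left
      nhdsWithin_le_nhds
  obtain ⟨t, htK, ht⟩ :=
    ((hseg.eventually (mem_interior_iff_mem_nhds.1 h0)).and self_mem_nhdsWithin).exists
  calc 0 < t * (‖v‖ * ‖v‖) := by have := norm_pos_iff.2 hv; positivity
    _ = inner ℝ (t • v) v := by rw [real_inner_smul_left, real_inner_self_eq_norm_mul_norm]
    _ ≤ supportFn K v := le_supportFn hK htK v

theorem supportFn_smul (K : Set (E n)) {t : ℝ} (ht : 0 ≤ t) (v : E n) :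
    supportFn (t • K) v = t * supportFn K v := by
  have himg : (fun x => inner ℝ x v) '' (t • K) = t • (fun x => inner ℝ x v) '' K := by
    rw [← image_smul, ← image_smul, image_image, image_image]
    simp only [real_inner_smul_left, smul_eq_mul]
  rw [supportFn, himg, Real.sSup_smul_of_nonneg ht, smul_eq_mul, supportFn]

theorem supportFn_smul_mem_Ioo {K : Set (E n)} (hK : IsCompact K) (h0 : (0 : E n) ∈ interior K)
    {v : E n} (hv : v ≠ 0) {c t : ℝ} (hKc : supportFn K v ≤ c) (ht0 : 0 < t) (ht1 : t < 1) :
    supportFn (t • K) v ∈ Ioo 0 c := by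
  have hKv := supportFn_pos hK h0 hv
  rw [supportFn_smul K ht0.le]
  exact ⟨mul_pos ht0 hKv, (mul_lt_of_lt_one_left hKv ht1).trans_le hKc⟩

theorem polarBody_anti {K L : Set (E n)} (h : K ⊆ L) : polarBody L ⊆ polarBody K :=
  fun _ hy x hx => hy x (h hx)

theorem polarBody_smul (K : Set (E n)) {t : ℝ} (ht : 0 < t) :
    polarBody (t • K) = t⁻¹ • polarBody K := by
  ext y
  rw [mem_inv_smul_set_iff₀ ht.ne']
  simp only [polarBody, mem_ofPred_eq, ← image_smul, forall_mem_image, real_inner_smul_left,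
    real_inner_smul_right]

theorem closedBall_inv_subset_polarBody {K : Set (E n)} {R : ℝ} (hR : 0 < R)
    (hK : K ⊆ closedBall 0 R) : closedBall (0 : E n) R⁻¹ ⊆ polarBody K := by
  intro y hy x hx
  rw [mem_closedBall_zero_iff] at hy
  have hx' : ‖x‖ ≤ R := mem_closedBall_zero_iff.1 (hK hx)
  calc inner ℝ x y ≤ ‖x‖ * ‖y‖ := real_inner_le_norm x y
    _ ≤ R * R⁻¹ := mul_le_mul hx' hy (norm_nonneg _) hR.le
    _ = 1 := mul_inv_cancel₀ hR.ne'

theorem volume_polarBody_pos {K : Set (E n)} (hK : IsBounded K) :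
    0 < volume (polarBody K) := by
  obtain ⟨R, hR, hKR⟩ := hK.subset_closedBall_lt 0 0
  exact (measure_closedBall_pos volume 0 (inv_pos.2 hR)).trans_le
    (measure_mono (closedBall_inv_subset_polarBody hR hKR))

theorem exists_inner_le_lt_one_lt_inner {K : Set (E n)} (hKconv : Convex ℝ K)
    (hKclosed : IsClosed K) (h0 : (0 : E n) ∈ K) {z : E n} (hz : z ∉ K) :
    ∃ y : E n, ∃ s < 1, (∀ x ∈ K, inner ℝ x y ≤ s) ∧ 1 < inner ℝ z y := by
  obtain ⟨f, c, hfK, hfz⟩ := geometric_hahn_banach_closed_point hKconv hKclosed hz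
  have hc : 0 < c := by simpa using hfK 0 h0
  obtain ⟨d, hcd, hdz⟩ := exists_between hfz
  have hd : 0 < d := hc.trans hcd
  set y := d⁻¹ • (InnerProductSpace.toDual ℝ (E n)).symm f
  have hinner : ∀ x, inner ℝ x y = f x / d := by
    intro x
    rw [real_inner_smul_right, real_inner_comm, InnerProductSpace.toDual_symm_apply,
      inv_mul_eq_div]
  refine ⟨y, c / d, (div_lt_one hd).2 hcd, fun x hx => ?_, ?_⟩
  · rw [hinner]
    exact div_le_div_of_nonneg_right (hfK x hx).le hd.le
  · rw [hinner, one_lt_div hd]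
    linarith

theorem mem_interior_polarBody {K : Set (E n)} (hK : IsBounded K) {y : E n} {s : ℝ}
    (hs : s < 1) (hy : ∀ x ∈ K, inner ℝ x y ≤ s) : y ∈ interior (polarBody K) := by
  obtain ⟨R, hR, hKR⟩ := hK.subset_closedBall_lt 0 0
  refine mem_interior_iff_mem_nhds.2 (Metric.mem_nhds_iff.2
    ⟨(1 - s) / R, div_pos (by linarith) hR, fun y' hy' x hx => ?_⟩)
  have hxR : ‖x‖ ≤ R := mem_closedBall_zero_iff.1 (hKR hx)
  have hy' : ‖y' - y‖ ≤ (1 - s) / R := (mem_ball_iff_norm.1 hy').le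
  calc inner ℝ x y' = inner ℝ x y + inner ℝ x (y' - y) := by
        rw [← inner_add_right, add_sub_cancel]
    _ ≤ s + ‖x‖ * ‖y' - y‖ := add_le_add (hy x hx) (real_inner_le_norm x _)
    _ ≤ s + R * ((1 - s) / R) := by gcongr
    _ = 1 := by field_simp; ring

theorem volume_polarBody_lt_of_subset_of_not_subset {K L : Set (E n)} (hK : IsCompact K)
    (hKconv : Convex ℝ K) (h0 : (0 : E n) ∈ K) (hKL : K ⊆ L) (hLK : ¬L ⊆ K)
    (hfin : volume (polarBody K) ≠ ⊤) : volume (polarBody L) < volume (polarBody K) := by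
  obtain ⟨z, hzL, hzK⟩ := not_subset.1 hLK
  obtain ⟨y, s, hs, hyK, hzy⟩ := exists_inner_le_lt_one_lt_inner hKconv hK.isClosed h0 hzK
  set U := interior (polarBody K) ∩ {y' | 1 < inner ℝ z y'}
  have hU : IsOpen U := isOpen_interior.inter (isOpen_lt continuous_const (by fun_prop))
  have hU_pos : 0 < volume U :=
    hU.measure_pos volume ⟨y, mem_interior_polarBody hK.isBounded hs hyK, hzy⟩
  have hdisj : Disjoint (polarBody L) U :=
    disjoint_left.2 fun y' hy' hU' => (hy' z hzL).not_gt hU'.2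
  have hfinL : volume (polarBody L) ≠ ⊤ :=
    ne_top_of_le_ne_top hfin (measure_mono (polarBody_anti hKL))
  calc volume (polarBody L) < volume (polarBody L) + volume U :=
        ENNReal.lt_add_right hfinL hU_pos.ne'
    _ = volume (polarBody L ∪ U) := (measure_union hdisj hU.measurableSet).symm
    _ ≤ volume (polarBody K) :=
        measure_mono (union_subset (polarBody_anti hKL) (inter_subset_left.trans interior_subset))

theorem exists_volume_polarBody_smul_eq (hn : 0 < n) {K : Set (E n)} {c : ℝ≥0∞}
    (h0 : volume (polarBody K) ≠ 0) (hlt : volume (polarBody K) < c) (hc : c ≠ ⊤) :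
    ∃ t : ℝ, 0 < t ∧ t < 1 ∧ volume (polarBody (t • K)) = c := by
  have hfin : volume (polarBody K) ≠ ⊤ := ne_top_of_lt hlt
  set a := (volume (polarBody K)).toReal
  have ha : 0 < a := ENNReal.toReal_pos h0 hfin
  have hab : a < c.toReal := ENNReal.toReal_strict_mono hc hlt
  set s := (c.toReal / a) ^ (n : ℝ)⁻¹
  have hs : 1 < s := Real.one_lt_rpow ((one_lt_div ha).2 hab) (by positivity)
  have hsn : s ^ n = c.toReal / a := Real.rpow_inv_natCast_pow (by positivity) hn.ne'
  refine ⟨s⁻¹, by positivity, inv_lt_one_of_one_lt₀ hs, ?_⟩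
  rw [polarBody_smul K (by positivity), inv_inv,
    Measure.addHaar_smul_of_nonneg volume (by positivity), finrank_euclideanSpace_fin, hsn,
    ← ENNReal.ofReal_toReal hfin, ← ENNReal.ofReal_mul (by positivity), div_mul_cancel₀ _ ha.ne',
    ENNReal.ofReal_toReal hc]

end ConvexGeometry

section Polyhedron

variable {n : ℕ} {ι : Type*}

def polyhedron (u : ι → E n) (h : ι → ℝ) : Set (E n) :=
  ⋂ i, {x | inner ℝ x (u i) ≤ h i}

variable (u : ι → E n) (h : ι → ℝ)

theorem isClosed_polyhedron : IsClosed (polyhedron u h) :=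
  isClosed_iInter fun _ => isClosed_le (by fun_prop) continuous_const

theorem convex_polyhedron : Convex ℝ (polyhedron u h) :=
  convex_iInter fun i => convex_halfSpace_le
    ⟨fun x y => inner_add_left x y (u i), fun c x => real_inner_smul_left x (u i) c⟩ (h i)

theorem isBounded_polyhedron [Fintype ι]
    (hu : ∀ v ∈ sphere (0 : E n) 1, ∃ i, 0 < inner ℝ (u i) v) : IsBounded (polyhedron u h) := by
  set g : E n → ℝ := fun v => ∑ i, max (inner ℝ (u i) v) 0
  have hg_pos : ∀ v ∈ sphere (0 : E n) 1, 0 < g v := fun v hv => by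
    obtain ⟨i, hi⟩ := hu v hv
    exact Finset.sum_pos' (fun j _ => le_max_right _ _)
      ⟨i, Finset.mem_univ i, hi.trans_le (le_max_left _ _)⟩
  obtain ⟨ε, hε, hεg⟩ :=
    (isCompact_sphere (0 : E n) 1).exists_forall_le' (by fun_prop) hg_pos
  have hg_smul : ∀ {c : ℝ}, 0 ≤ c → ∀ v, g (c • v) = c * g v := fun hc v => by
    simp only [g, real_inner_smul_right, Finset.mul_sum, mul_max_of_nonneg _ _ hc, mul_zero]
  have hg_le : ∀ x ∈ polyhedron u h, g x ≤ ∑ i, |h i| := fun x hx =>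
    Finset.sum_le_sum fun i _ => max_le
      (by rw [real_inner_comm]; exact (mem_iInter.1 hx i).trans (le_abs_self _)) (abs_nonneg _)
  refine isBounded_iff_forall_norm_le.2 ⟨(∑ i, |h i|) / ε, fun x hx => ?_⟩
  rw [le_div_iff₀ hε]
  rcases eq_or_ne x 0 with rfl | hx0
  · simpa using Finset.sum_nonneg fun i _ => abs_nonneg (h i)
  · have hv : ‖x‖⁻¹ • x ∈ sphere (0 : E n) 1 := by simp [norm_smul, hx0]
    calc ‖x‖ * ε ≤ ‖x‖ * g (‖x‖⁻¹ • x) := mul_le_mul_of_nonneg_left (hεg _ hv) (norm_nonneg _)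
      _ = g x := by
        rw [← hg_smul (norm_nonneg x), smul_smul, mul_inv_cancel₀ (norm_ne_zero_iff.2 hx0),
          one_smul]
      _ ≤ ∑ i, |h i| := hg_le x hx

theorem zero_mem_interior_polyhedron [Finite ι] (hh : ∀ i, 0 < h i) :
    (0 : E n) ∈ interior (polyhedron u h) :=
  mem_interior_iff_mem_nhds.2 <| iInter_mem.2 fun i =>
    ((by fun_prop : Continuous fun x : E n => inner ℝ x (u i)).continuousAt.eventually_lt
      continuousAt_const (by simpa using hh i)).mono fun _ hx => hx.le

theorem isBody_polyhedron [Fintype ι]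
    (hu : ∀ v ∈ sphere (0 : E n) 1, ∃ i, 0 < inner ℝ (u i) v) (hh : ∀ i, 0 < h i) :
    IsBody (polyhedron u h) :=
  ⟨isCompact_of_isClosed_isBounded (isClosed_polyhedron u h) (isBounded_polyhedron u h hu),
    convex_polyhedron u h, zero_mem_interior_polyhedron u h hh⟩

theorem subset_polyhedron_supportFn {K : Set (E n)} (hK : IsCompact K) :
    K ⊆ polyhedron u fun i => supportFn K (u i) :=
  fun _ hx => mem_iInter.2 fun i => le_supportFn hK hx (u i)

theorem supportFn_polyhedron_le (hne : (polyhedron u h).Nonempty) (i : ι) :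
    supportFn (polyhedron u h) (u i) ≤ h i :=
  supportFn_le hne fun _ hx => mem_iInter.1 hx i

end Polyhedron

theorem integral_sum_smul_dirac {α ι : Type*} [MeasurableSpace α] [MeasurableSingletonClass α]
    [Fintype ι] (u : ι → α) {lam : ι → ℝ} (hlam : ∀ i, 0 ≤ lam i) (f : α → ℝ) :
    ∫ w, f w ∂(∑ i, ENNReal.ofReal (lam i) • Measure.dirac (u i)) = ∑ i, lam i * f (u i) := by
  rw [integral_finsetSum_measure fun i _ =>
    ((integrable_const (f (u i))).congr (ae_eq_dirac f).symm).smul_measure ENNReal.ofReal_ne_top]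
  refine Finset.sum_congr rfl fun i _ => ?_
  rw [integral_smul_measure, integral_dirac, ENNReal.toReal_ofReal (hlam i), smul_eq_mul]

theorem discrete_minimizer_is_polytope_general {n m : ℕ}
    (u : Fin m → Sph n) (lam : Fin m → ℝ) (hlam : ∀ i, 0 < lam i)
    (hhemi : ∀ v : Sph n, ∃ i, 0 < (inner ℝ (u i : E n) (v : E n) : ℝ))
    (μ : Measure (Sph n))
    (hμ : μ = ∑ i : Fin m, ENNReal.ofReal (lam i) • Measure.dirac (u i))
    (φ : ℝ → ℝ) (hφmono : StrictMonoOn φ (Ioi 0))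
    (M : Set (E n)) (hM : IsBody M)
    (hMvol : volume (polarBody M) = unitBallVol n)
    (hmin : ∀ L : Set (E n), IsBody L → volume (polarBody L) = unitBallVol n →
      ∫ w : Sph n, φ (supportFn M (w : E n)) ∂μ ≤ ∫ w : Sph n, φ (supportFn L (w : E n)) ∂μ) :
    M = ⋂ i : Fin m, {x : E n | (inner ℝ x (u i : E n) : ℝ) ≤ supportFn M (u i : E n)} := by
  obtain ⟨hMc, hMconv, hM0⟩ := hM
  set P := polyhedron (fun i => (u i : E n)) fun i => supportFn M (u i)
  have hMP : M ⊆ P := subset_polyhedron_supportFn _ hMc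
  refine hMP.antisymm (not_not.1 fun hPM => ?_)
  obtain ⟨z, -, hzM⟩ := not_subset.1 hPM
  have hz : z ≠ 0 := fun h => hzM (h ▸ interior_subset hM0)
  have hn : 0 < n := Nat.pos_of_ne_zero fun h => hz (by subst h; exact Subsingleton.elim _ _)
  have : Nonempty (Fin m) := ⟨(hhemi ⟨‖z‖⁻¹ • z, by simp [norm_smul, hz]⟩).choose⟩
  have hhM : ∀ i, 0 < supportFn M (u i) := fun i =>
    supportFn_pos hMc hM0 (ne_zero_of_mem_unit_sphere (u i))
  have hP : IsBody P := isBody_polyhedron _ _ (fun v hv => hhemi ⟨v, hv⟩) hhM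
  have hω : unitBallVol n ≠ ⊤ := measure_closedBall_lt_top.ne
  have hlt : volume (polarBody P) < unitBallVol n := hMvol ▸
    volume_polarBody_lt_of_subset_of_not_subset hMc hMconv (interior_subset hM0) hMP hPM
      (hMvol ▸ hω)
  obtain ⟨t, ht0, ht1, htP⟩ :=
    exists_volume_polarBody_smul_eq hn (volume_polarBody_pos hP.1.isBounded).ne' hlt hω
  have hshrink : ∀ i, supportFn (t • P) (u i) ∈ Ioo 0 (supportFn M (u i)) := fun i =>
    supportFn_smul_mem_Ioo hP.1 hP.2.2 (ne_zero_of_mem_unit_sphere (u i))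
      (supportFn_polyhedron_le _ _ ⟨0, interior_subset hP.2.2⟩ i) ht0 ht1
  have hle := hmin (t • P) (hP.smul ht0) htP
  rw [hμ, integral_sum_smul_dirac _ (fun i => (hlam i).le),
    integral_sum_smul_dirac _ (fun i => (hlam i).le)] at hle
  exact hle.not_gt (Finset.sum_lt_sum_of_nonempty Finset.univ_nonempty fun i _ =>
    mul_lt_mul_of_pos_left (hφmono (hshrink i).1 (hhM i) (hshrink i).2) (hlam i))

theorem discrete_minimizer_is_polytope {n m : ℕ}
    (u : Fin m → Sph n) (lam : Fin m → ℝ) (hlam : ∀ i, 0 < lam i)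
    (hhemi : ∀ v : Sph n, ∃ i, 0 < (inner ℝ (u i : E n) (v : E n) : ℝ))
    (μ : Measure (Sph n))
    (hμ : μ = ∑ i : Fin m, ENNReal.ofReal (lam i) • Measure.dirac (u i))
    (φ : ℝ → ℝ) (hφc : ContinuousOn φ (Ioi 0)) (hφmono : StrictMonoOn φ (Ioi 0))
    (hφpos : ∀ t ∈ Ioi (0 : ℝ), 0 < φ t)
    (hφ0 : Tendsto φ (nhdsWithin 0 (Ioi 0)) (nhds 0))
    (hφ1 : φ 1 = 1) (hφtop : Tendsto φ atTop atTop)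
    (M : Set (E n)) (hM : IsBody M)
    (hMvol : volume (polarBody M) = unitBallVol n)
    (hmin : ∀ L : Set (E n), IsBody L → volume (polarBody L) = unitBallVol n →
      ∫ w : Sph n, φ (supportFn M (w : E n)) ∂μ ≤ ∫ w : Sph n, φ (supportFn L (w : E n)) ∂μ) :
    M = ⋂ i : Fin m, {x : E n | (inner ℝ x (u i : E n) : ℝ) ≤ supportFn M (u i : E n)} :=
  discrete_minimizer_is_polytope_general u lam hlam hhemi μ hμ φ hφmono M hM hMvol hmin
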